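/- arXiv:math/0510594 — 2 statements merged into one kernel-verified Lean document; each statement's English description precedes it below -/
import Mathlib

section
/- Let X be a compact Hausdorff space and {X_i}_{i=1,…,n} a finite cover of X by closed subsets. Suppose for each i we are given a unital C(X_i)-algebra A_i, and for each pair i,j with X_i ∩ X_j nonempty a C(X_i ∩ X_j)-isomorphism α_ij : A_j|_{X_i ∩ X_j} → A_i|_{X_i ∩ X_j}, such that α_ii = id and, after restriction to X_i ∩ X_j ∩ X_k, α_ij ∘ α_jk = α_ik for all i,j,k. Then there exist a unital C(X)-algebra A and C(X_i)-isomorphisms π_i : A|_{X_i} → A_i such that for all i,j the composite π_i ∘ π_j^{-1}, restricted to X_i ∩ X_j, equals α_ij. -/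
/-! The glued algebra is the C⋆-subalgebra of `∏ i, A i` formed by the families `(x i)` that are
compatible over every `Xᵢ ∩ Xⱼ`, with `C(X)` acting diagonally, and `π i` is the `i`-th coordinate.

The kernel of `π k` is the restriction ideal over `Xₖ` because restriction ideals have an
approximate-unit description: `a ∈ I(W)` iff `‖e • a‖` can be made arbitrarily small with continuous
`e : X → [0, 1]` equal to `1` on `W`;
finitely many such `e` multiply to one serving all coordinates.

`π k` is onto by patching: a compatible family is extended one index `m` at a time; the cocycle
condition makes the local candidates agree modulo `I(Xₘ ∩ Xᵢ ∩ Xⱼ)`, and they are corrected using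
`I(W₁ ∩ W₂) = I(W₁) + I(W₂)` for closed `W₁, W₂`. That identity holds up to an arbitrarily small
error by Tietze's extension theorem, and exactly after summing a geometric series of corrections. -/

universe u

/-- For a compact Hausdorff space `X` and a unital `C(X)`-algebra `(A, φ)` (a unital C*-algebra
`A` with a unital *-homomorphism `φ : C(X, ℂ) → A` taking values in the center of `A`; a unital
`C(W)`-algebra for a closed subset `W ⊆ X` is the same thing as a unital `C(X)`-algebra on which
every `f` vanishing on `W` acts as zero, via the surjective restriction map `C(X) → C(W)`),
the restriction ideal over a closed subset `W ⊆ X` is the closed two-sided ideal of `A`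
generated by `{φ(f) * a : f ∈ C(X, ℂ), f vanishes on W, a ∈ A}`; since `φ` is central this
is the closed linear span of that set. -/
noncomputable def restrictionIdeal {X : Type} [TopologicalSpace X] {A : Type u}
    [CStarAlgebra A] (φ : C(X, ℂ) →⋆ₐ[ℂ] A) (W : Set X) : Submodule ℂ A :=
  (Submodule.span ℂ
    {y : A | ∃ (f : C(X, ℂ)) (a : A), (∀ w ∈ W, f w = 0) ∧ y = φ f * a}).topologicalClosure

/-- `η : A → B` presents the unital `C(X)`-algebra `(B, φB)` as the restriction `A|_W` of the
unital `C(X)`-algebra `(A, φA)` over the closed set `W`: `η` is a surjective unital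
*-homomorphism, it intertwines the `C(X)`-actions, and its kernel is exactly the restriction
ideal of `A` over `W`.  (Such an `η` identifies `B` with the quotient C*-algebra
`A ⧸ restrictionIdeal φA W`, uniquely up to isomorphism.) -/
def IsRestrictionMap {X : Type} [TopologicalSpace X] {A : Type u} {B : Type u}
    [CStarAlgebra A] [CStarAlgebra B] (φA : C(X, ℂ) →⋆ₐ[ℂ] A) (φB : C(X, ℂ) →⋆ₐ[ℂ] B)
    (W : Set X) (η : A →⋆ₐ[ℂ] B) : Prop :=
  Function.Surjective η ∧ (∀ (f : C(X, ℂ)) (a : A), η (φA f * a) = φB f * η a) ∧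
    (∀ a : A, η a = 0 ↔ a ∈ restrictionIdeal φA W)

open scoped CStarAlgebra

theorem exists_mem_sub_mem_of_approx {E S : Type*} [NormedAddCommGroup E] [CompleteSpace E]
    [SetLike S E] [AddSubgroupClass S E] {I J : S} (hI : IsClosed (I : Set E))
    (hJ : IsClosed (J : Set E)) {K : Set E}
    (h : ∀ b ∈ K, ∀ ε > 0, ∃ c ∈ I, ∃ d ∈ J, b - c - d ∈ K ∧ ‖c‖ ≤ ‖b‖ ∧ ‖b - c - d‖ ≤ ε)
    {a : E} (ha : a ∈ K) : ∃ c ∈ I, a - c ∈ J := by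
  choose! c hcI d hdJ hK hc hcd using h
  -- `r n` is the remainder after `n` approximation steps with errors `1, 1/2, 1/4, …`
  let r : ℕ → E := fun n => Nat.rec a (fun k b => b - c b ((1 / 2) ^ k) - d b ((1 / 2) ^ k)) n
  have hr_succ (n : ℕ) : r (n + 1) = r n - c (r n) ((1 / 2) ^ n) - d (r n) ((1 / 2) ^ n) := rfl
  have hrK (n : ℕ) : r n ∈ K := by
    induction n with
    | zero => exact ha
    | succ n ih => rw [hr_succ]; exact hK _ ih _ (by positivity)
  set cs : ℕ → E := fun n => c (r n) ((1 / 2) ^ n)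
  set ds : ℕ → E := fun n => d (r n) ((1 / 2) ^ n)
  have hr_norm (n : ℕ) : ‖r (n + 1)‖ ≤ (1 / 2) ^ n := hcd _ (hrK n) _ (by positivity)
  have hr_tendsto : Filter.Tendsto r Filter.atTop (nhds 0) := by
    rw [← Filter.tendsto_add_atTop_iff_nat 1]
    exact squeeze_zero_norm hr_norm
      (tendsto_pow_atTop_nhds_zero_of_lt_one (by norm_num) (by norm_num))
  have hcs : Summable cs := by
    refine (summable_nat_add_iff 1).mp (summable_geometric_two.of_norm_bounded fun n => ?_)
    exact (hc _ (hrK (n + 1)) _ (by positivity)).trans (hr_norm n)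
  have htelescope (n : ℕ) :
      ∑ i ∈ Finset.range n, ds i = a - ∑ i ∈ Finset.range n, cs i - r n := by
    induction n with
    | zero => simp [r]
    | succ n ih => rw [Finset.sum_range_succ, Finset.sum_range_succ, ih, hr_succ]; abel
  have hds : Filter.Tendsto (fun n => ∑ i ∈ Finset.range n, ds i) Filter.atTop
      (nhds (a - ∑' i, cs i - 0)) := by
    simp_rw [htelescope]
    exact (tendsto_const_nhds.sub hcs.hasSum.tendsto_sum_nat).sub hr_tendsto
  refine ⟨∑' i, cs i, hI.mem_of_tendsto hcs.hasSum.tendsto_sum_nat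
    (.of_forall fun n => sum_mem fun i _ => hcI _ (hrK i) _ (by positivity)), ?_⟩
  rw [← sub_zero (a - _)]
  exact hJ.mem_of_tendsto hds
    (.of_forall fun n => sum_mem fun i _ => hdJ _ (hrK i) _ (by positivity))

def IsCutoff {X : Type} [TopologicalSpace X] (W : Set X) (e : C(X, ℝ)) : Prop :=
  (∀ x, e x ∈ Set.Icc (0 : ℝ) 1) ∧ ∀ w ∈ W, e w = 1

namespace IsCutoff

variable {X : Type} [TopologicalSpace X] {W W' : Set X} {e e' : C(X, ℝ)}

lemma one_sub_mem (he : IsCutoff W e) (x : X) : (1 - e) x ∈ Set.Icc (0 : ℝ) 1 := by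
  have := he.1 x
  simp only [ContinuousMap.sub_apply, ContinuousMap.one_apply, Set.mem_Icc] at this ⊢
  constructor <;> linarith

lemma mul (he : IsCutoff W e) (he' : IsCutoff W e') : IsCutoff W (e * e') :=
  ⟨fun x => ⟨mul_nonneg (he.1 x).1 (he'.1 x).1, mul_le_one₀ (he.1 x).2 (he'.1 x).1 (he'.1 x).2⟩,
    fun w hw => by simp [he.2 w hw, he'.2 w hw]⟩

lemma prod {ι : Type*} (s : Finset ι) {e : ι → C(X, ℝ)} (he : ∀ i, IsCutoff W (e i)) :
    IsCutoff W (∏ i ∈ s, e i) := by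
  classical
  induction s using Finset.induction_on with
  | empty => exact ⟨fun x => by simp, fun w _ => by simp⟩
  | insert i s _ ih => rw [Finset.prod_insert ‹_›]; exact (he i).mul ih

lemma union (he : IsCutoff W e) (he' : IsCutoff W' e') : IsCutoff (W ∪ W') (e + (1 - e) * e') := by
  refine ⟨fun x => ?_, ?_⟩
  · obtain ⟨h0, h1⟩ := he.1 x
    obtain ⟨h0', h1'⟩ := he'.1 x
    simp only [ContinuousMap.add_apply, ContinuousMap.mul_apply, ContinuousMap.sub_apply,
      ContinuousMap.one_apply, Set.mem_Icc]
    constructor <;> nlinarith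
  · rintro w (hw | hw) <;> simp [he.2 w, he'.2 w, hw]

lemma exists_isCutoff_eqOn [NormalSpace X] {W₁ W₂ : Set X} (hW₁ : IsClosed W₁)
    (hW₂ : IsClosed W₂) {e : C(X, ℝ)} (he : IsCutoff (W₁ ∩ W₂) e) :
    ∃ v, IsCutoff W₁ v ∧ ∀ x ∈ W₂, v x = e x := by
  classical
  let g : X → ℝ := fun x => if x ∈ W₁ then 1 else e x
  have hg₁ : ∀ x ∈ W₁, g x = 1 := fun x hx => if_pos hx
  have hg₂ : ∀ x ∈ W₂, g x = e x := fun x hx => by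
    by_cases h₁ : x ∈ W₁
    · simp [g, h₁, he.2 x ⟨h₁, hx⟩]
    · simp [g, h₁]
  have hg : ContinuousOn g (W₁ ∪ W₂) :=
    (continuousOn_const.congr hg₁).union_of_isClosed (e.continuous.continuousOn.congr hg₂) hW₁ hW₂
  obtain ⟨v, hv, hvg⟩ := ContinuousMap.exists_restrict_eq_forall_mem_of_closed
    ⟨(W₁ ∪ W₂).domRestrict g, hg.domRestrict⟩ (t := Set.Icc 0 1)
    (fun x => by by_cases h₁ : (x : X) ∈ W₁ <;> simp [g, h₁, he.1 x]) ⟨0, by simp⟩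
    (hW₁.union hW₂)
  have hvg' (x) (hx : x ∈ W₁ ∪ W₂) : v x = g x := congr($hvg ⟨x, hx⟩)
  exact ⟨v, ⟨hv, fun w hw => (hvg' w (.inl hw)).trans (hg₁ w hw)⟩,
    fun x hx => (hvg' x (.inr hx)).trans (hg₂ x hx)⟩

end IsCutoff

section RealAction

variable {X : Type} [TopologicalSpace X] {B : Type u} [CStarAlgebra B]

noncomputable def realAct (φ : C(X, ℂ) →⋆ₐ[ℂ] B) : C(X, ℝ) →+* B :=
  (φ : C(X, ℂ) →+* B).comp (ContinuousMap.realToRCLikeStarAlgHom X ℂ)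

lemma realAct_apply (φ : C(X, ℂ) →⋆ₐ[ℂ] B) (e : C(X, ℝ)) :
    realAct φ e = φ (e.realToRCLike ℂ) := rfl

lemma sub_realAct_mul_eq (φ : C(X, ℂ) →⋆ₐ[ℂ] B) (e : C(X, ℝ)) (a : B) :
    a - realAct φ (1 - e) * a = realAct φ e * a := by
  rw [map_sub, map_one, sub_mul, one_mul, sub_sub_cancel]

variable [CompactSpace X]

lemma norm_realAct_le_one (φ : C(X, ℂ) →⋆ₐ[ℂ] B) {e : C(X, ℝ)}
    (he : ∀ x, e x ∈ Set.Icc (0 : ℝ) 1) : ‖realAct φ e‖ ≤ 1 := by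
  refine (NonUnitalStarAlgHom.norm_apply_le φ _).trans ?_
  rw [ContinuousMap.norm_le _ zero_le_one]
  intro x
  simpa [abs_of_nonneg (he x).1] using (he x).2

lemma norm_realAct_mul_le (φ : C(X, ℂ) →⋆ₐ[ℂ] B) {e : C(X, ℝ)}
    (he : ∀ x, e x ∈ Set.Icc (0 : ℝ) 1) (a : B) : ‖realAct φ e * a‖ ≤ ‖a‖ :=
  (norm_mul_le _ _).trans (mul_le_of_le_one_left (norm_nonneg _) (norm_realAct_le_one φ he))

lemma norm_realAct_mul_mul_le (φ : C(X, ℂ) →⋆ₐ[ℂ] B) {e' : C(X, ℝ)}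
    (he' : ∀ x, e' x ∈ Set.Icc (0 : ℝ) 1) (e : C(X, ℝ)) (a : B) :
    ‖realAct φ (e' * e) * a‖ ≤ ‖realAct φ e * a‖ := by
  rw [map_mul, mul_assoc]
  exact norm_realAct_mul_le φ he' _

noncomputable def cutoffSubmodule (φ : C(X, ℂ) →⋆ₐ[ℂ] B) (W : Set X) : Submodule ℂ B where
  carrier := {a | ∀ ε > 0, ∃ e, IsCutoff W e ∧ ‖realAct φ e * a‖ ≤ ε}
  zero_mem' ε hε := ⟨1, ⟨fun x => by simp, fun w _ => by simp⟩, by simpa using hε.le⟩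
  add_mem' {a b} ha hb ε hε := by
    obtain ⟨e, he, hea⟩ := ha (ε / 2) (by positivity)
    obtain ⟨e', he', heb⟩ := hb (ε / 2) (by positivity)
    refine ⟨e * e', he.mul he', ?_⟩
    calc ‖realAct φ (e * e') * (a + b)‖
        ≤ ‖realAct φ (e' * e) * a‖ + ‖realAct φ (e * e') * b‖ := by
          rw [mul_add, mul_comm e' e]; exact norm_add_le _ _
      _ ≤ ε / 2 + ε / 2 := add_le_add
          ((norm_realAct_mul_mul_le φ he'.1 e a).trans hea)
          ((norm_realAct_mul_mul_le φ he.1 e' b).trans heb)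
      _ = ε := add_halves ε
  smul_mem' c a ha ε hε := by
    obtain ⟨e, he, hea⟩ := ha (ε / (‖c‖ + 1)) (by positivity)
    refine ⟨e, he, ?_⟩
    rw [mul_smul_comm, norm_smul]
    calc ‖c‖ * ‖realAct φ e * a‖ ≤ (‖c‖ + 1) * (ε / (‖c‖ + 1)) := by gcongr; linarith
      _ = ε := by field_simp

lemma isClosed_cutoffSubmodule (φ : C(X, ℂ) →⋆ₐ[ℂ] B) (W : Set X) :
    IsClosed (cutoffSubmodule φ W : Set B) := by
  refine isClosed_of_closure_subset fun a ha ε hε => ?_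
  obtain ⟨b, hb, hab⟩ := Metric.mem_closure_iff.mp ha (ε / 2) (by positivity)
  obtain ⟨e, he, heb⟩ := hb (ε / 2) (by positivity)
  refine ⟨e, he, ?_⟩
  calc ‖realAct φ e * a‖ ≤ ‖realAct φ e * (a - b)‖ + ‖realAct φ e * b‖ := by
        rw [mul_sub]; exact norm_le_norm_sub_add _ _
    _ ≤ ‖a - b‖ + ε / 2 := by
        gcongr
        exact norm_realAct_mul_le φ he.1 _
    _ ≤ ε / 2 + ε / 2 := by gcongr; rw [← dist_eq_norm]; exact hab.le
    _ = ε := add_halves ε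

lemma mul_mem_cutoffSubmodule (φ : C(X, ℂ) →⋆ₐ[ℂ] B) {W : Set X} {f : C(X, ℂ)}
    (hf : ∀ w ∈ W, f w = 0) (b : B) : φ f * b ∈ cutoffSubmodule φ W := by
  intro ε hε
  set δ := ε / (‖b‖ + 1)
  have hδ : 0 < δ := by positivity
  -- `e` is `1` where `f` vanishes and `0` where `‖f‖ ≥ δ`, so `‖e * f‖ ≤ δ`
  let e : C(X, ℝ) := ⟨fun x => max (1 - ‖f x‖ / δ) 0, by fun_prop⟩
  have he : IsCutoff W e := by
    refine ⟨fun x => ⟨le_max_right _ _, max_le ?_ zero_le_one⟩, fun w hw => by simp [e, hf w hw]⟩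
    have : 0 ≤ ‖f x‖ / δ := by positivity
    linarith
  have hef : ‖e.realToRCLike ℂ * f‖ ≤ δ := by
    refine (ContinuousMap.norm_le _ hδ.le).mpr fun x => ?_
    simp only [ContinuousMap.mul_apply, ContinuousMap.realToRCLike_apply, norm_mul,
      RCLike.norm_ofReal]
    rw [abs_of_nonneg (he.1 x).1]
    rcases le_total (‖f x‖) δ with h | h
    · exact (mul_le_of_le_one_left (norm_nonneg _) (he.1 x).2).trans h
    · have : e x = 0 := max_eq_right (by rw [sub_nonpos, le_div_iff₀ hδ]; linarith)
      simp [this, hδ.le]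
  refine ⟨e, he, ?_⟩
  calc ‖realAct φ e * (φ f * b)‖ = ‖φ (e.realToRCLike ℂ * f) * b‖ := by
        rw [realAct_apply, map_mul, mul_assoc]
    _ ≤ δ * ‖b‖ :=
        (norm_mul_le _ _).trans (by gcongr; exact (NonUnitalStarAlgHom.norm_apply_le φ _).trans hef)
    _ ≤ δ * (‖b‖ + 1) := by gcongr; linarith
    _ = ε := div_mul_cancel₀ ε (by positivity)

theorem restrictionIdeal_eq_cutoffSubmodule (φ : C(X, ℂ) →⋆ₐ[ℂ] B) (W : Set X) :
    restrictionIdeal φ W = cutoffSubmodule φ W := by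
  refine le_antisymm (Submodule.topologicalClosure_minimal _ ?_ (isClosed_cutoffSubmodule φ W))
    fun a ha => ?_
  · rw [Submodule.span_le]
    rintro _ ⟨f, b, hf, rfl⟩
    exact mul_mem_cutoffSubmodule φ hf b
  · refine Metric.mem_closure_iff.mpr fun ε hε => ?_
    obtain ⟨e, he, hea⟩ := ha (ε / 2) (by positivity)
    refine ⟨realAct φ (1 - e) * a, Submodule.subset_span ⟨(1 - e).realToRCLike ℂ, a,
      fun w hw => by simp [he.2 w hw], rfl⟩, ?_⟩
    rw [dist_eq_norm, sub_realAct_mul_eq]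
    linarith

theorem mem_restrictionIdeal_iff (φ : C(X, ℂ) →⋆ₐ[ℂ] B) (W : Set X) (a : B) :
    a ∈ restrictionIdeal φ W ↔ ∀ ε > 0, ∃ e, IsCutoff W e ∧ ‖realAct φ e * a‖ ≤ ε := by
  rw [restrictionIdeal_eq_cutoffSubmodule]; rfl

end RealAction

section RestrictionIdeal

variable {X : Type} [TopologicalSpace X] {B : Type u} [CStarAlgebra B]

lemma isClosed_restrictionIdeal (φ : C(X, ℂ) →⋆ₐ[ℂ] B) (W : Set X) :
    IsClosed (restrictionIdeal φ W : Set B) :=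
  Submodule.isClosed_topologicalClosure _

lemma mul_mem_restrictionIdeal (φ : C(X, ℂ) →⋆ₐ[ℂ] B) {W : Set X} {f : C(X, ℂ)}
    (hf : ∀ w ∈ W, f w = 0) (a : B) : φ f * a ∈ restrictionIdeal φ W :=
  Submodule.le_topologicalClosure _ (Submodule.subset_span ⟨f, a, hf, rfl⟩)

lemma realAct_mul_mem_restrictionIdeal (φ : C(X, ℂ) →⋆ₐ[ℂ] B) {W : Set X} {e : C(X, ℝ)}
    (he : ∀ w ∈ W, e w = 0) (a : B) : realAct φ e * a ∈ restrictionIdeal φ W :=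
  mul_mem_restrictionIdeal φ (fun w hw => by simp [he w hw]) a

lemma restrictionIdeal_anti (φ : C(X, ℂ) →⋆ₐ[ℂ] B) {W W' : Set X} (h : W ⊆ W') :
    restrictionIdeal φ W' ≤ restrictionIdeal φ W :=
  Submodule.topologicalClosure_mono <| Submodule.span_mono <| by
    rintro _ ⟨f, a, hf, rfl⟩
    exact ⟨f, a, fun w hw => hf w (h hw), rfl⟩

lemma restrictionIdeal_empty (φ : C(X, ℂ) →⋆ₐ[ℂ] B) : restrictionIdeal φ ∅ = ⊤ :=
  eq_top_iff.mpr fun a _ => by simpa using mul_mem_restrictionIdeal φ (f := 1) (by simp) a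

lemma restrictionIdeal_eq_bot {φ : C(X, ℂ) →⋆ₐ[ℂ] B} {V : Set X}
    (hφ : ∀ f : C(X, ℂ), (∀ w ∈ V, f w = 0) → φ f = 0) : restrictionIdeal φ V = ⊥ := by
  refine eq_bot_iff.mpr (Submodule.topologicalClosure_minimal _ ?_ ?_)
  · rw [Submodule.span_le]
    rintro _ ⟨f, a, hf, rfl⟩
    simp [hφ f hf]
  · simp

lemma restrictionIdeal_le_comap {C : Type u} [CStarAlgebra C] {φ : C(X, ℂ) →⋆ₐ[ℂ] B}
    {ψ : C(X, ℂ) →⋆ₐ[ℂ] C} {p : B →⋆ₐ[ℂ] C} (hp : ∀ f a, p (φ f * a) = ψ f * p a) (W : Set X) :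
    restrictionIdeal φ W ≤ (restrictionIdeal ψ W).comap (p : B →ₗ[ℂ] C) := by
  refine Submodule.topologicalClosure_minimal _ ?_
    ((isClosed_restrictionIdeal ψ W).preimage (map_continuous p))
  rw [Submodule.span_le]
  rintro _ ⟨f, a, hf, rfl⟩
  simpa [hp] using mul_mem_restrictionIdeal ψ hf (p a)

variable [CompactSpace X]

lemma mem_restrictionIdeal_union (φ : C(X, ℂ) →⋆ₐ[ℂ] B) {W W' : Set X} {a : B}
    (h : a ∈ restrictionIdeal φ W) (h' : a ∈ restrictionIdeal φ W') :
    a ∈ restrictionIdeal φ (W ∪ W') := by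
  rw [mem_restrictionIdeal_iff] at h h' ⊢
  intro ε hε
  obtain ⟨e, he, hea⟩ := h (ε / 2) (by positivity)
  obtain ⟨e', he', hea'⟩ := h' (ε / 2) (by positivity)
  refine ⟨e + (1 - e) * e', he.union he', ?_⟩
  calc ‖realAct φ (e + (1 - e) * e') * a‖
      ≤ ‖realAct φ e * a‖ + ‖realAct φ ((1 - e) * e') * a‖ := by
        rw [map_add, add_mul]; exact norm_add_le _ _
    _ ≤ ε / 2 + ε / 2 := add_le_add hea ((norm_realAct_mul_mul_le φ he.one_sub_mem _ _).trans hea')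
    _ = ε := add_halves ε

lemma mem_restrictionIdeal_biUnion (φ : C(X, ℂ) →⋆ₐ[ℂ] B) {ι : Type*} {W : ι → Set X}
    (s : Finset ι) {a : B} (h : ∀ i ∈ s, a ∈ restrictionIdeal φ (W i)) :
    a ∈ restrictionIdeal φ (⋃ i ∈ s, W i) := by
  classical
  induction s using Finset.induction_on with
  | empty => simp [restrictionIdeal_empty]
  | insert i s _ ih =>
    rw [Finset.set_biUnion_insert]
    exact mem_restrictionIdeal_union φ (h i (s.mem_insert_self i))
      (ih fun j hj => h j (Finset.mem_insert_of_mem hj))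

lemma exists_isCutoff_forall_norm_le {ι : Type*} [Fintype ι] {B : ι → Type u}
    [∀ i, CStarAlgebra (B i)] (φ : ∀ i, C(X, ℂ) →⋆ₐ[ℂ] B i) {W : Set X} {a : ∀ i, B i}
    (ha : ∀ i, a i ∈ restrictionIdeal (φ i) W) {ε : ℝ} (hε : 0 < ε) :
    ∃ e, IsCutoff W e ∧ ∀ i, ‖realAct (φ i) e * a i‖ ≤ ε := by
  classical
  choose e he hea using fun i => (mem_restrictionIdeal_iff (φ i) W (a i)).mp (ha i) ε hε
  refine ⟨∏ i, e i, IsCutoff.prod _ he, fun i => ?_⟩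
  rw [← Finset.prod_erase_mul _ _ (Finset.mem_univ i)]
  exact (norm_realAct_mul_mul_le _ (IsCutoff.prod _ he).1 _ _).trans (hea i)

variable [T2Space X]

theorem exists_mem_restrictionIdeal_sub_mem (φ : C(X, ℂ) →⋆ₐ[ℂ] B) {W₁ W₂ : Set X}
    (hW₁ : IsClosed W₁) (hW₂ : IsClosed W₂) {a : B} (ha : a ∈ restrictionIdeal φ (W₁ ∩ W₂)) :
    ∃ c ∈ restrictionIdeal φ W₁, a - c ∈ restrictionIdeal φ W₂ := by
  refine exists_mem_sub_mem_of_approx (isClosed_restrictionIdeal φ W₁)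
    (isClosed_restrictionIdeal φ W₂) (fun b hb ε hε => ?_) ha
  obtain ⟨e, he, heb⟩ := (mem_restrictionIdeal_iff φ _ b).mp hb ε hε
  obtain ⟨v, hv, hve⟩ := he.exists_isCutoff_eqOn hW₁ hW₂
  have hc : realAct φ (1 - v) * b ∈ restrictionIdeal φ W₁ :=
    realAct_mul_mem_restrictionIdeal φ (fun w hw => by simp [hv.2 w hw]) b
  have hd : realAct φ (v - e) * b ∈ restrictionIdeal φ W₂ :=
    realAct_mul_mem_restrictionIdeal φ (fun w hw => by simp [hve w hw]) b
  have hrest : b - realAct φ (1 - v) * b - realAct φ (v - e) * b = realAct φ e * b := by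
    simp only [map_sub, map_one]; noncomm_ring
  refine ⟨_, hc, _, hd, ?_, ?_, hrest ▸ heb⟩
  · exact sub_mem (sub_mem hb (restrictionIdeal_anti φ Set.inter_subset_left hc))
      (restrictionIdeal_anti φ Set.inter_subset_right hd)
  · exact norm_realAct_mul_le φ hv.one_sub_mem b

lemma mem_restrictionIdeal_of_mem_inter {φ : C(X, ℂ) →⋆ₐ[ℂ] B} {V W : Set X} (hV : IsClosed V)
    (hW : IsClosed W) (hφ : ∀ f : C(X, ℂ), (∀ v ∈ V, f v = 0) → φ f = 0) {a : B}
    (ha : a ∈ restrictionIdeal φ (V ∩ W)) : a ∈ restrictionIdeal φ W := by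
  obtain ⟨c, hc, hac⟩ := exists_mem_restrictionIdeal_sub_mem φ hV hW ha
  rw [restrictionIdeal_eq_bot hφ, Submodule.mem_bot] at hc
  rwa [hc, sub_zero] at hac

theorem exists_sub_mem_restrictionIdeal (φ : C(X, ℂ) →⋆ₐ[ℂ] B) {ι : Type*} {W : ι → Set X}
    (hW : ∀ i, IsClosed (W i)) (s : Finset ι) {b : ι → B}
    (hb : ∀ i ∈ s, ∀ j ∈ s, b i - b j ∈ restrictionIdeal φ (W i ∩ W j)) :
    ∃ c, ∀ i ∈ s, c - b i ∈ restrictionIdeal φ (W i) := by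
  classical
  induction s using Finset.induction_on with
  | empty => exact ⟨0, by simp⟩
  | insert i₀ s _ ih =>
    obtain ⟨c, hc⟩ := ih fun i hi j hj =>
      hb i (Finset.mem_insert_of_mem hi) j (Finset.mem_insert_of_mem hj)
    have hdiff : b i₀ - c ∈ restrictionIdeal φ ((⋃ j ∈ s, W j) ∩ W i₀) := by
      rw [Set.inter_comm, Set.inter_iUnion₂]
      refine mem_restrictionIdeal_biUnion φ s fun j hj => ?_
      rw [← sub_sub_sub_cancel_right _ _ (b j)]
      exact sub_mem (hb _ (s.mem_insert_self i₀) _ (Finset.mem_insert_of_mem hj))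
        (restrictionIdeal_anti φ Set.inter_subset_right (hc j hj))
    obtain ⟨d, hd, hdiffd⟩ := exists_mem_restrictionIdeal_sub_mem φ
      (s.finite_toSet.isClosed_biUnion fun j _ => hW j) (hW i₀) hdiff
    refine ⟨c + d, fun i hi => ?_⟩
    rcases Finset.mem_insert.mp hi with rfl | hi
    · simpa [sub_sub, add_comm d] using neg_mem hdiffd
    · rw [add_sub_right_comm]
      exact add_mem (hc i hi) (restrictionIdeal_anti φ (Set.subset_biUnion_of_mem hi) hd)

end RestrictionIdeal

lemma IsRestrictionMap.apply_eq_apply_iff {X : Type} [TopologicalSpace X] {A B : Type u}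
    [CStarAlgebra A] [CStarAlgebra B] {φA : C(X, ℂ) →⋆ₐ[ℂ] A} {φB : C(X, ℂ) →⋆ₐ[ℂ] B}
    {W : Set X} {η : A →⋆ₐ[ℂ] B} (hη : IsRestrictionMap φA φB W η) {a b : A} :
    η a = η b ↔ a - b ∈ restrictionIdeal φA W := by
  rw [← sub_eq_zero, ← map_sub, hη.2.2]

section Glueing

variable {X : Type} [TopologicalSpace X] {ι : Type} {A : ι → Type u} [∀ i, CStarAlgebra (A i)]
  {R : ι → ι → Type u} [∀ i j, CStarAlgebra (R i j)]
  (η : ∀ i j, A i →⋆ₐ[ℂ] R i j) (α : ∀ i j, R j i ≃⋆ₐ[ℂ] R i j)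

def Compatible {i j : ι} (a : A i) (b : A j) : Prop :=
  η i j a = α i j (η j i b)

def CocycleCondition (φ : ∀ i, C(X, ℂ) →⋆ₐ[ℂ] A i) (Xi : ι → Set X) : Prop :=
  ∀ i j k (a : A k) (b : A j) (c d : A i), Compatible η α b a → Compatible η α c b →
    Compatible η α d a → c - d ∈ restrictionIdeal (φ i) (Xi i ∩ Xi j ∩ Xi k)

def gluedSubalgebra : StarSubalgebra ℂ (∀ i, A i) where
  carrier := {x | ∀ i j, Compatible η α (x i) (x j)}
  mul_mem' hx hy i j := by
    simp only [Compatible, Pi.mul_apply, map_mul]; exact congr_arg₂ _ (hx i j) (hy i j)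
  add_mem' hx hy i j := by
    simp only [Compatible, Pi.add_apply, map_add]; exact congr_arg₂ _ (hx i j) (hy i j)
  algebraMap_mem' c i j := by simp only [Compatible, Pi.algebraMap_apply, AlgHomClass.commutes]
  star_mem' hx i j := by simp only [Compatible, Pi.star_apply, map_star]; exact congr_arg _ (hx i j)

instance isClosed_gluedSubalgebra : IsClosed (gluedSubalgebra η α : Set (∀ i, A i)) := by
  show IsClosed {x : ∀ i, A i | ∀ i j, η i j (x i) = α i j (η j i (x j))}
  simp only [Set.ofPred_forall]
  exact isClosed_iInter fun i => isClosed_iInter fun j => isClosed_eq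
    ((map_continuous (η i j)).comp (continuous_apply i))
    ((map_continuous (α i j)).comp ((map_continuous (η j i)).comp (continuous_apply j)))

noncomputable def gluedProj (k : ι) : gluedSubalgebra η α →⋆ₐ[ℂ] A k :=
  (Pi.evalStarAlgHom ℂ A k).comp (gluedSubalgebra η α).subtype

noncomputable def gluedStructMap {φ : ∀ i, C(X, ℂ) →⋆ₐ[ℂ] A i} {ψ : ∀ i j, C(X, ℂ) →⋆ₐ[ℂ] R i j}
    (hηφ : ∀ i j f a, η i j (φ i f * a) = ψ i j f * η i j a)
    (hα : ∀ i j f r, α i j (ψ j i f * r) = ψ i j f * α i j r) :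
    C(X, ℂ) →⋆ₐ[ℂ] gluedSubalgebra η α where
  toFun f := ⟨fun i => φ i f, fun i j => by
    have h (i j) : η i j (φ i f) = ψ i j f := by simpa using hηφ i j f 1
    show η i j (φ i f) = α i j (η j i (φ j f))
    rw [h, h, ← mul_one (ψ j i f), hα, map_one, mul_one]⟩
  map_one' := Subtype.ext <| funext fun i => map_one (φ i)
  map_mul' f g := Subtype.ext <| funext fun i => map_mul (φ i) f g
  map_zero' := Subtype.ext <| funext fun i => map_zero (φ i)
  map_add' f g := Subtype.ext <| funext fun i => map_add (φ i) f g
  commutes' c := Subtype.ext <| funext fun i => AlgHomClass.commutes (φ i) c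
  map_star' f := Subtype.ext <| funext fun i => map_star (φ i) f

variable {η α} {φ : ∀ i, C(X, ℂ) →⋆ₐ[ℂ] A i} {ψ : ∀ i j, C(X, ℂ) →⋆ₐ[ℂ] R i j} {Xi : ι → Set X}

lemma Compatible.symm (hη : ∀ i j, IsRestrictionMap (φ i) (ψ i j) (Xi i ∩ Xi j) (η i j))
    (hαid : ∀ i (r : R i i), α i i r = r) (hcoc : CocycleCondition η α φ Xi) {i j : ι}
    {a : A i} {b : A j} (h : Compatible η α a b) : Compatible η α b a := by
  obtain ⟨c, hc⟩ := (hη j i).1 (α j i (η i j a))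
  have hcb := hcoc j i j b a c b h hc (hαid j _).symm
  rw [Set.inter_right_comm, Set.inter_self] at hcb
  exact ((hη j i).apply_eq_apply_iff.mpr hcb).symm.trans hc

lemma exists_compatible [CompactSpace X] [T2Space X] (hXi : ∀ i, IsClosed (Xi i))
    (hη : ∀ i j, IsRestrictionMap (φ i) (ψ i j) (Xi i ∩ Xi j) (η i j))
    (hcoc : CocycleCondition η α φ Xi) {s : Finset ι}
    {x : ∀ i, A i} (hx : ∀ i ∈ s, ∀ j ∈ s, Compatible η α (x i) (x j)) (m : ι) :
    ∃ b : A m, ∀ j ∈ s, Compatible η α b (x j) := by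
  choose b hb using fun j => (hη m j).1 (α m j (η j m (x j)))
  obtain ⟨c, hc⟩ := exists_sub_mem_restrictionIdeal (φ m) (W := fun j => Xi m ∩ Xi j)
    (fun j => (hXi m).inter (hXi j)) s (b := b) fun i hi j hj => by
      rw [← Set.inter_inter_distrib_left, ← Set.inter_assoc]
      exact hcoc m i j (x j) (x i) (b i) (b j) (hx i hi j hj) (hb i) (hb j)
  exact ⟨c, fun j hj => ((hη m j).apply_eq_apply_iff.mpr (hc j hj)).trans (hb j)⟩

lemma compatible_update [DecidableEq ι]
    (hη : ∀ i j, IsRestrictionMap (φ i) (ψ i j) (Xi i ∩ Xi j) (η i j))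
    (hαid : ∀ i (r : R i i), α i i r = r) (hcoc : CocycleCondition η α φ Xi) {s : Finset ι}
    {x : ∀ i, A i} (hx : ∀ i ∈ s, ∀ j ∈ s, Compatible η α (x i) (x j)) {m : ι} (hm : m ∉ s)
    {b : A m} (hb : ∀ j ∈ s, Compatible η α b (x j)) :
    ∀ i ∈ insert m s, ∀ j ∈ insert m s,
      Compatible η α (Function.update x m b i) (Function.update x m b j) := by
  have hne {i} (hi : i ∈ s) : i ≠ m := ne_of_mem_of_not_mem hi hm
  intro i hi j hj
  rcases Finset.mem_insert.mp hi with rfl | his <;> rcases Finset.mem_insert.mp hj with rfl | hjs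
  · simpa [Compatible] using (hαid _ _).symm
  · simpa [hne hjs] using hb j hjs
  · simpa [hne his] using (hb i his).symm hη hαid hcoc
  · simpa [hne his, hne hjs] using hx i his j hjs

variable [Fintype ι] [CompactSpace X] [T2Space X]

theorem gluedProj_surjective (hXi : ∀ i, IsClosed (Xi i))
    (hη : ∀ i j, IsRestrictionMap (φ i) (ψ i j) (Xi i ∩ Xi j) (η i j))
    (hαid : ∀ i (r : R i i), α i i r = r) (hcoc : CocycleCondition η α φ Xi) (k : ι) :
    Function.Surjective (gluedProj η α k) := by
  classical
  intro a
  suffices ∀ s : Finset ι, k ∉ s → ∃ x : ∀ i, A i, x k = a ∧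
      ∀ i ∈ insert k s, ∀ j ∈ insert k s, Compatible η α (x i) (x j) by
    obtain ⟨x, hxk, hx⟩ := this (Finset.univ.erase k) (Finset.notMem_erase k _)
    rw [Finset.insert_erase (Finset.mem_univ k)] at hx
    exact ⟨⟨x, fun i j => hx i (Finset.mem_univ i) j (Finset.mem_univ j)⟩, hxk⟩
  intro s
  induction s using Finset.induction_on with
  | empty =>
    refine fun _ => ⟨Pi.single k a, by simp, ?_⟩
    simpa [Compatible] using (hαid k _).symm
  | insert m s hm ih =>
    intro hk
    have hmk : m ≠ k := fun h => hk (h ▸ Finset.mem_insert_self m s)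
    obtain ⟨x, hxk, hx⟩ := ih fun h => hk (Finset.mem_insert_of_mem h)
    obtain ⟨b, hb⟩ := exists_compatible hXi hη hcoc hx m
    refine ⟨Function.update x m b, by rwa [Function.update_of_ne hmk.symm], ?_⟩
    rw [Finset.insert_comm]
    exact compatible_update hη hαid hcoc hx (by simp [hmk, hm]) hb

theorem gluedProj_eq_zero_iff (hXi : ∀ i, IsClosed (Xi i))
    (hφ : ∀ i (f : C(X, ℂ)), (∀ w ∈ Xi i, f w = 0) → φ i f = 0)
    (hη : ∀ i j, IsRestrictionMap (φ i) (ψ i j) (Xi i ∩ Xi j) (η i j))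
    (hα : ∀ i j f r, α i j (ψ j i f * r) = ψ i j f * α i j r) (k : ι)
    (x : gluedSubalgebra η α) :
    gluedProj η α k x = 0 ↔
      x ∈ restrictionIdeal (gluedStructMap η α (fun i j => (hη i j).2.1) hα) (Xi k) := by
  constructor
  · intro hxk
    have hx (j : ι) : (x : ∀ i, A i) j ∈ restrictionIdeal (φ j) (Xi k) := by
      refine mem_restrictionIdeal_of_mem_inter (hXi j) (hXi k) (hφ j) ?_
      refine ((hη j k).2.2 _).mp (Eq.trans (x.2 j k) ?_)
      rw [show (x : ∀ i, A i) k = 0 from hxk, map_zero, map_zero]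
    refine (mem_restrictionIdeal_iff _ _ x).mpr fun ε hε => ?_
    obtain ⟨e, he, hex⟩ := exists_isCutoff_forall_norm_le φ hx hε
    exact ⟨e, he, (pi_norm_le_iff_of_nonneg hε.le).mpr hex⟩
  · intro hx
    have := restrictionIdeal_le_comap (p := gluedProj η α k) (fun f a => rfl) (Xi k) hx
    rwa [Submodule.mem_comap, restrictionIdeal_eq_bot (hφ k), Submodule.mem_bot] at this

end Glueing

theorem stmt_5_general (X : Type) [TopologicalSpace X] [CompactSpace X] [T2Space X]
    (n : ℕ) (Xi : Fin n → Set X)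
    (hXiclosed : ∀ i, IsClosed (Xi i))
    -- the unital `C(Xᵢ)`-algebras `A i`
    (A : Fin n → Type u) [∀ i, CStarAlgebra (A i)]
    (φ : ∀ i, C(X, ℂ) →⋆ₐ[ℂ] A i)
    (hφcentral : ∀ i (f : C(X, ℂ)) (a : A i), φ i f * a = a * φ i f)
    (hφsupp : ∀ i (f : C(X, ℂ)), (∀ w ∈ Xi i, f w = 0) → φ i f = 0)
    -- the restrictions `R i j = A i|_{Xᵢ ∩ Xⱼ}`
    (R : Fin n → Fin n → Type u) [∀ i j, CStarAlgebra (R i j)]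
    (ψ : ∀ i j, C(X, ℂ) →⋆ₐ[ℂ] R i j)
    (η : ∀ i j, A i →⋆ₐ[ℂ] R i j)
    (hη : ∀ i j, IsRestrictionMap (φ i) (ψ i j) (Xi i ∩ Xi j) (η i j))
    -- the `C(Xᵢ ∩ Xⱼ)`-isomorphisms `α i j : A j|_{Xᵢ∩Xⱼ} ≅ A i|_{Xᵢ∩Xⱼ}`
    (α : ∀ i j, R j i ≃⋆ₐ[ℂ] R i j)
    (hα : ∀ i j (f : C(X, ℂ)) (r : R j i), α i j (ψ j i f * r) = ψ i j f * α i j r)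
    (hαid : ∀ i (r : R i i), α i i r = r)
    -- the cocycle identity `α i j ∘ α j k = α i k` over `Xᵢ ∩ Xⱼ ∩ Xₖ`, on representatives
    (hcocycle : ∀ i j k (a : A k) (b : A j) (c d : A i),
      η j k b = α j k (η k j a) → η i j c = α i j (η j i b) → η i k d = α i k (η k i a) →
      c - d ∈ restrictionIdeal (φ i) (Xi i ∩ Xi j ∩ Xi k)) :
    ∃ (A' : Type u) (_ : CStarAlgebra A') (φ' : C(X, ℂ) →⋆ₐ[ℂ] A'),
      (∀ (f : C(X, ℂ)) (a : A'), φ' f * a = a * φ' f) ∧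
      ∃ p : ∀ i, A' →⋆ₐ[ℂ] A i,
        (∀ i, IsRestrictionMap φ' (φ i) (Xi i) (p i)) ∧
        (∀ i j (a : A'), η i j (p i a) = α i j (η j i (p j a))) :=
  ⟨gluedSubalgebra η α, inferInstance, gluedStructMap η α (fun i j => (hη i j).2.1) hα,
    fun f a => Subtype.ext <| funext fun i => hφcentral i f (a.1 i), gluedProj η α,
    fun i => ⟨gluedProj_surjective hXiclosed hη hαid hcocycle i, fun _ _ => rfl,
      gluedProj_eq_zero_iff hXiclosed hφsupp hη hα i⟩,
    fun i j a => a.2 i j⟩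

/-- **glueing of `C(X)`-algebras.**  Let `X` be a compact Hausdorff space and
`X₁, …, Xₙ` a finite closed cover of `X`.  Suppose for each `i` we are given a unital
`C(Xᵢ)`-algebra `(A i, φ i)` (encoded as a unital `C(X)`-algebra on which functions vanishing on
`Xᵢ` act as zero), for each pair `i, j` a restriction `(R i j, ψ i j, η i j)` of `A i` over
`Xᵢ ∩ Xⱼ`, and `C(Xᵢ ∩ Xⱼ)`-isomorphisms `α i j : A j|_{Xᵢ∩Xⱼ} ≅ A i|_{Xᵢ∩Xⱼ}` with `α i i = id`
and satisfying the cocycle condition `α i j ∘ α j k = α i k` after restriction to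
`Xᵢ ∩ Xⱼ ∩ Xₖ` (expressed on representatives).  Then there exist a unital `C(X)`-algebra
`(A', φ')` and `C(Xᵢ)`-isomorphisms `π i : A'|_{Xᵢ} → A i` (encoded as surjective
`C(X)`-morphisms `p i : A' → A i` with kernel the restriction ideal over `Xᵢ`) such that for
all `i, j` the composite `π i ∘ (π j)⁻¹` restricted over `Xᵢ ∩ Xⱼ` equals `α i j`. -/
theorem stmt_5 (X : Type) [TopologicalSpace X] [CompactSpace X] [T2Space X]
    (n : ℕ) (Xi : Fin n → Set X)
    (hXiclosed : ∀ i, IsClosed (Xi i)) (hXicover : ⋃ i, Xi i = Set.univ)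
    -- the unital `C(Xᵢ)`-algebras `A i`
    (A : Fin n → Type u) [∀ i, CStarAlgebra (A i)]
    (φ : ∀ i, C(X, ℂ) →⋆ₐ[ℂ] A i)
    (hφcentral : ∀ i (f : C(X, ℂ)) (a : A i), φ i f * a = a * φ i f)
    (hφsupp : ∀ i (f : C(X, ℂ)), (∀ w ∈ Xi i, f w = 0) → φ i f = 0)
    -- the restrictions `R i j = A i|_{Xᵢ ∩ Xⱼ}`
    (R : Fin n → Fin n → Type u) [∀ i j, CStarAlgebra (R i j)]
    (ψ : ∀ i j, C(X, ℂ) →⋆ₐ[ℂ] R i j)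
    (hψcentral : ∀ i j (f : C(X, ℂ)) (r : R i j), ψ i j f * r = r * ψ i j f)
    (η : ∀ i j, A i →⋆ₐ[ℂ] R i j)
    (hη : ∀ i j, IsRestrictionMap (φ i) (ψ i j) (Xi i ∩ Xi j) (η i j))
    -- the `C(Xᵢ ∩ Xⱼ)`-isomorphisms `α i j : A j|_{Xᵢ∩Xⱼ} ≅ A i|_{Xᵢ∩Xⱼ}`
    (α : ∀ i j, R j i ≃⋆ₐ[ℂ] R i j)
    (hα : ∀ i j (f : C(X, ℂ)) (r : R j i), α i j (ψ j i f * r) = ψ i j f * α i j r)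
    (hαid : ∀ i (r : R i i), α i i r = r)
    -- the cocycle identity `α i j ∘ α j k = α i k` over `Xᵢ ∩ Xⱼ ∩ Xₖ`, on representatives
    (hcocycle : ∀ i j k (a : A k) (b : A j) (c d : A i),
      η j k b = α j k (η k j a) → η i j c = α i j (η j i b) → η i k d = α i k (η k i a) →
      c - d ∈ restrictionIdeal (φ i) (Xi i ∩ Xi j ∩ Xi k)) :
    ∃ (A' : Type u) (_ : CStarAlgebra A') (φ' : C(X, ℂ) →⋆ₐ[ℂ] A'),
      (∀ (f : C(X, ℂ)) (a : A'), φ' f * a = a * φ' f) ∧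
      ∃ p : ∀ i, A' →⋆ₐ[ℂ] A i,
        (∀ i, IsRestrictionMap φ' (φ i) (Xi i) (p i)) ∧
        (∀ i j (a : A'), η i j (p i a) = α i j (η j i (p j a))) :=
  stmt_5_general X n Xi hXiclosed A φ hφcentral hφsupp R ψ η hη α hα hαid hcocycle
end

section
/- Let A be a unital C*-algebra with 1 ≠ 0, let V ∈ A satisfy V*·V = 1, and set P := V·V*. Let α : A → A be a *-homomorphism such that α(P) = P, and suppose that V*·α(V) = z·1 for some complex number z. Then |z| = 1 and α(V) = z·V. -/
/-! The range projection `P = V V*` fixes `α V`, since `α V = α (P V) = P α V`; hence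
`α V = V (V* α V) = z V`. Applying `α` to `P = V V*` then gives `P = |z|² P`, and `P ≠ 0`. -/

theorem eq_smul_of_mul_star_mul_eq {R A : Type*} [Monoid A] [Star A] [SMul R A]
    [SMulCommClass R A A] {V W : A} {z : R}
    (hW : V * star V * W = W) (hz : star V * W = z • 1) : W = z • V := by
  rw [← hW, mul_assoc, hz, mul_smul_comm, mul_one]

theorem mul_star_self_ne_zero_of_star_mul_self_eq_one {A : Type*} [MonoidWithZero A] [Star A]
    [Nontrivial A] {V : A} (hV : star V * V = 1) : V * star V ≠ 0 := by
  intro h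
  have : star V * (V * star V) * V = 1 := by rw [mul_assoc, mul_assoc, hV, mul_one, hV]
  simp [h] at this

theorem norm_eq_one_of_smul_mul_star_smul_eq {A : Type*} [Ring A] [StarRing A] [Module ℂ A]
    [StarModule ℂ A] [SMulCommClass ℂ A A] [IsScalarTower ℂ A A] [NoZeroSMulDivisors ℂ A]
    {V : A} {z : ℂ} (hP : V * star V ≠ 0) (h : z • V * star (z • V) = V * star V) :
    ‖z‖ = 1 := by
  rw [star_smul, smul_mul_smul_comm] at h
  have hz : z * star z = 1 := smul_left_injective ℂ hP (h.trans (one_smul ℂ _).symm)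
  rw [Complex.star_def, Complex.mul_conj'] at hz
  have hz' : ‖z‖ ^ 2 = 1 := by exact_mod_cast hz
  exact (pow_eq_one_iff_of_nonneg (norm_nonneg z) two_ne_zero).mp hz'

/-- Let `A` be a unital C*-algebra with `1 ≠ 0`, let `V ∈ A` be an isometry
(`V* V = 1`) and `P := V V*` the associated projection.  Let `α : A → A` be a *-homomorphism
with `α P = P`, and suppose `V* · α V = z • 1` for some complex number `z`.  Then `|z| = 1`
and `α V = z • V`. -/
theorem stmt_11 (A : Type*) [CStarAlgebra A] (h1 : (1 : A) ≠ 0)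
    (V : A) (hV : star V * V = 1) (P : A) (hP : P = V * star V)
    (α : A →⋆ₙₐ[ℂ] A) (hα : α P = P)
    (z : ℂ) (hz : star V * α V = z • (1 : A)) :
    ‖z‖ = 1 ∧ α V = z • V := by
  subst hP
  have hαV : α V = z • V :=
    eq_smul_of_mul_star_mul_eq (by rw [← hα, ← map_mul, mul_assoc, hV, mul_one]) hz
  have : Nontrivial A := nontrivial_of_ne _ _ h1
  refine ⟨norm_eq_one_of_smul_mul_star_smul_eq
    (mul_star_self_ne_zero_of_star_mul_self_eq_one hV) ?_, hαV⟩
  rw [← hαV, ← map_star, ← map_mul, hα]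
end
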